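/- arXiv:2511.09062 — 6 statements merged into one kernel-verified Lean document; each statement's English description precedes it below -/
import Mathlib

section
/- The function Φ is an exact potential for the user-side game: for every user i, every fixed profile F₋ᵢ of the other users' allocations, and every pair of allocations f_i, g_i ∈ ℝ^m for user i, one has Φ(g_i, F₋ᵢ) − Φ(f_i, F₋ᵢ) = C_i(g_i; F₋ᵢ) − C_i(f_i; F₋ᵢ). -/
open Finset

noncomputable section

namespace PriLLM

/-- The set `Δᵢ` of feasible allocations for a user with total demand `Di`:
nonnegative vectors in `ℝ^m` whose coordinates sum to `Di`. -/
def simplex {m : ℕ} (Di : ℝ) : Set (Fin m → ℝ) :=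
  {f | (∀ j, 0 ≤ f j) ∧ ∑ j, f j = Di}

/-- User `i`'s routing cost `Cᵢ(F) = Σⱼ fᵢⱼ (wₚ pⱼ + w_q Qⱼ(F) + w_d dᵢⱼ − bⱼ)`,
where `Qⱼ(F) = (Σₖ fₖⱼ)/αⱼ` is the congestion factor of provider `j`. -/
def cost {n m : ℕ} (wp wq wd : ℝ) (p b α : Fin m → ℝ)
    (d : Fin n → Fin m → ℝ) (F : Fin n → Fin m → ℝ) (i : Fin n) : ℝ :=
  ∑ j, F i j * (wp * p j + wq * ((∑ k, F k j) / α j) + wd * d i j - b j)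

/-- The potential function
`Φ(F) = Σᵢ Σⱼ (wₚ pⱼ + w_d dᵢⱼ − bⱼ) fᵢⱼ + Σⱼ (w_q/(2αⱼ))((Σᵢ fᵢⱼ)² + Σᵢ fᵢⱼ²)`. -/
def potential {n m : ℕ} (wp wq wd : ℝ) (p b α : Fin m → ℝ)
    (d : Fin n → Fin m → ℝ) (F : Fin n → Fin m → ℝ) : ℝ :=
  (∑ i, ∑ j, (wp * p j + wd * d i j - b j) * F i j) +
    ∑ j, (wq / (2 * α j)) * ((∑ i, F i j) ^ 2 + ∑ i, (F i j) ^ 2)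

/-- `Φ` is an exact potential for the user-side game: for every user `i`, every
fixed profile `F₋ᵢ` of the other users' allocations and every pair `fᵢ, gᵢ ∈ ℝ^m`,
`Φ(gᵢ, F₋ᵢ) − Φ(fᵢ, F₋ᵢ) = Cᵢ(gᵢ; F₋ᵢ) − Cᵢ(fᵢ; F₋ᵢ)`. -/
theorem potential_is_exact (n m : ℕ) (wp wd : ℝ) (wq : ℝ) (hwq : 0 < wq)
    (p b : Fin m → ℝ) (α : Fin m → ℝ) (hα : ∀ j, 0 < α j)
    (d : Fin n → Fin m → ℝ) (F : Fin n → Fin m → ℝ) (i : Fin n)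
    (f g : Fin m → ℝ) :
    potential wp wq wd p b α d (Function.update F i g) -
        potential wp wq wd p b α d (Function.update F i f) =
      cost wp wq wd p b α d (Function.update F i g) i -
        cost wp wq wd p b α d (Function.update F i f) i := by
  classical
  set S : Fin m → ℝ := fun j => ∑ k ∈ univ.erase i, F k j with hS
  set T : Fin m → ℝ := fun j => ∑ k ∈ univ.erase i, (F k j) ^ 2 with hT
  have hsum : ∀ (h : Fin m → ℝ) (j : Fin m),
      (∑ k, Function.update F i h k j) = S j + h j := by
    intro h j
    rw [← Finset.add_sum_erase _ _ (Finset.mem_univ i), Function.update_self,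
      Finset.sum_congr rfl fun k hk => by
        rw [Function.update_of_ne (Finset.ne_of_mem_erase hk)]]
    simp [hS, add_comm]
  have hsq : ∀ (h : Fin m → ℝ) (j : Fin m),
      (∑ k, (Function.update F i h k j) ^ 2) = T j + (h j) ^ 2 := by
    intro h j
    rw [← Finset.add_sum_erase _ _ (Finset.mem_univ i), Function.update_self,
      Finset.sum_congr rfl fun k hk => by
        rw [Function.update_of_ne (Finset.ne_of_mem_erase hk)]]
    simp [hT, add_comm]
  have hdouble : ∀ (h : Fin m → ℝ),
      (∑ k, ∑ j, (wp * p j + wd * d k j - b j) * Function.update F i h k j)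
        = (∑ k ∈ univ.erase i, ∑ j, (wp * p j + wd * d k j - b j) * F k j)
          + ∑ j, (wp * p j + wd * d i j - b j) * h j := by
    intro h
    rw [← Finset.add_sum_erase _ _ (Finset.mem_univ i),
      Finset.sum_congr rfl fun k hk => Finset.sum_congr rfl fun j _ => by
        rw [Function.update_of_ne (Finset.ne_of_mem_erase hk)]]
    simp only [Function.update_self]
    ring
  calc
    potential wp wq wd p b α d (Function.update F i g) -
        potential wp wq wd p b α d (Function.update F i f)
      = ∑ j, ((wp * p j + wd * d i j - b j) * (g j - f j)
          + (wq / (2 * α j)) *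
            (((S j + g j) ^ 2 + (T j + (g j) ^ 2))
              - ((S j + f j) ^ 2 + (T j + (f j) ^ 2)))) := by
        simp only [potential, hdouble, hsum, hsq, mul_add, mul_sub,
          Finset.sum_add_distrib, Finset.sum_sub_distrib]
        ring
    _ = ∑ j, (g j * (wp * p j + wq * ((S j + g j) / α j) + wd * d i j - b j)
          - f j * (wp * p j + wq * ((S j + f j) / α j) + wd * d i j - b j)) := by
        refine Finset.sum_congr rfl fun j _ => ?_
        have hαj : (α j) ≠ 0 := (hα j).ne'
        field_simp
        ring
    _ = cost wp wq wd p b α d (Function.update F i g) i -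
          cost wp wq wd p b α d (Function.update F i f) i := by
        simp only [cost, Function.update_self, hsum, Finset.sum_sub_distrib]

end PriLLM
end
end

section
/- The potential function Φ is strictly convex on ℝ^{n×m}: for all joint allocations F ≠ G and all t ∈ (0,1), Φ(tF + (1−t)G) < tΦ(F) + (1−t)Φ(G). -/
open Finset

noncomputable section

namespace PriLLM

/-- The potential function `Φ` is strictly convex on `ℝ^{n×m}`. -/
theorem potential_strictConvexOn (n m : ℕ) (wp wd : ℝ) (wq : ℝ) (hwq : 0 < wq)
    (p b : Fin m → ℝ) (α : Fin m → ℝ) (hα : ∀ j, 0 < α j)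
    (d : Fin n → Fin m → ℝ) :
    StrictConvexOn ℝ Set.univ
      (fun F : Fin n → Fin m → ℝ => potential wp wq wd p b α d F) := by
  refine ⟨convex_univ, ?_⟩
  intro x _ y _ hxy a c ha hc hac
  have key : potential wp wq wd p b α d (a • x + c • y)
      = a * potential wp wq wd p b α d x + c * potential wp wq wd p b α d y
        - a * c * ∑ j, (wq / (2 * α j)) *
            ((∑ i, (x i j - y i j)) ^ 2 + ∑ i, (x i j - y i j) ^ 2) := by
    have hc1 : c = 1 - a := by linarith
    subst hc1
    simp only [potential, Pi.add_apply, Pi.smul_apply, smul_eq_mul]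
    have hlin : ∑ i, ∑ j, (wp * p j + wd * d i j - b j) * (a * x i j + (1 - a) * y i j)
        = a * ∑ i, ∑ j, (wp * p j + wd * d i j - b j) * x i j
          + (1 - a) * ∑ i, ∑ j, (wp * p j + wd * d i j - b j) * y i j := by
      simp only [Finset.mul_sum, ← Finset.sum_add_distrib]
      exact Finset.sum_congr rfl fun i _ => Finset.sum_congr rfl fun j _ => by ring
    rw [hlin]
    have hsum1 : ∀ j, ∑ i, (a * x i j + (1 - a) * y i j)
        = a * ∑ i, x i j + (1 - a) * ∑ i, y i j := fun j => by
      rw [Finset.sum_add_distrib, Finset.mul_sum, Finset.mul_sum]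
    have hsq : ∀ j, ∑ i, (a * x i j + (1 - a) * y i j) ^ 2
        = a * ∑ i, (x i j) ^ 2 + (1 - a) * ∑ i, (y i j) ^ 2
          - a * (1 - a) * ∑ i, (x i j - y i j) ^ 2 := by
      intro j
      rw [Finset.sum_congr rfl (fun i (_ : i ∈ Finset.univ) =>
        (by ring : (a * x i j + (1 - a) * y i j) ^ 2
          = a * (x i j) ^ 2 + (1 - a) * (y i j) ^ 2
            - a * (1 - a) * (x i j - y i j) ^ 2)),
        Finset.sum_sub_distrib, Finset.sum_add_distrib,
        ← Finset.mul_sum, ← Finset.mul_sum, ← Finset.mul_sum]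
    have hq2 : ∑ j, wq / (2 * α j) * ((∑ i, (a * x i j + (1 - a) * y i j)) ^ 2
          + ∑ i, (a * x i j + (1 - a) * y i j) ^ 2)
        = a * ∑ j, wq / (2 * α j) * ((∑ i, x i j) ^ 2 + ∑ i, (x i j) ^ 2)
          + (1 - a) * ∑ j, wq / (2 * α j) * ((∑ i, y i j) ^ 2 + ∑ i, (y i j) ^ 2)
          - a * (1 - a) * ∑ j, wq / (2 * α j) *
              ((∑ i, (x i j - y i j)) ^ 2 + ∑ i, (x i j - y i j) ^ 2) := by
      calc ∑ j, wq / (2 * α j) * ((∑ i, (a * x i j + (1 - a) * y i j)) ^ 2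
              + ∑ i, (a * x i j + (1 - a) * y i j) ^ 2)
          = ∑ j, (a * (wq / (2 * α j) * ((∑ i, x i j) ^ 2 + ∑ i, (x i j) ^ 2))
              + (1 - a) * (wq / (2 * α j) * ((∑ i, y i j) ^ 2 + ∑ i, (y i j) ^ 2))
              - a * (1 - a) * (wq / (2 * α j) *
                  ((∑ i, (x i j - y i j)) ^ 2 + ∑ i, (x i j - y i j) ^ 2))) := by
            refine Finset.sum_congr rfl fun j _ => ?_
            rw [hsum1 j, hsq j, Finset.sum_sub_distrib]
            ring
        _ = _ := by
            rw [Finset.sum_sub_distrib, Finset.sum_add_distrib,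
              ← Finset.mul_sum, ← Finset.mul_sum, ← Finset.mul_sum]
    rw [hq2]
    ring
  have hD : 0 < ∑ j, (wq / (2 * α j)) *
      ((∑ i, (x i j - y i j)) ^ 2 + ∑ i, (x i j - y i j) ^ 2) := by
    obtain ⟨i0, hi0⟩ := Function.ne_iff.mp hxy
    obtain ⟨j0, hj0⟩ := Function.ne_iff.mp hi0
    refine Finset.sum_pos' (fun j _ => ?_) ⟨j0, Finset.mem_univ _, ?_⟩
    · have h1 : 0 < wq / (2 * α j) := div_pos hwq (by linarith [hα j])
      have h2 : (0:ℝ) ≤ (∑ i, (x i j - y i j)) ^ 2 := sq_nonneg _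
      have h3 : (0:ℝ) ≤ ∑ i, (x i j - y i j) ^ 2 :=
        Finset.sum_nonneg fun i _ => sq_nonneg _
      positivity
    · have h1 : 0 < wq / (2 * α j0) := div_pos hwq (by linarith [hα j0])
      have h3 : 0 < ∑ i, (x i j0 - y i j0) ^ 2 := by
        refine Finset.sum_pos' (fun i _ => sq_nonneg _) ⟨i0, Finset.mem_univ _, ?_⟩
        have : x i0 j0 - y i0 j0 ≠ 0 := sub_ne_zero_of_ne hj0
        positivity
      nlinarith [sq_nonneg (∑ i, (x i j0 - y i j0))]
  have hacpos : 0 < a * c := mul_pos ha hc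
  simp only [smul_eq_mul]
  rw [key]
  nlinarith [mul_pos hacpos hD]


end PriLLM
end
end

section
/- A feasible joint allocation F* ∈ Δ₁ × ⋯ × Δₙ is a Nash equilibrium of the user-side game if and only if F* minimizes the potential function Φ over Δ₁ × ⋯ × Δₙ. -/
open Finset

noncomputable section

namespace PriLLM

section aux

variable {n m : ℕ}

def lineA (wp wq wd : ℝ) (p b α : Fin m → ℝ) (d : Fin n → Fin m → ℝ)
    (F U : Fin n → Fin m → ℝ) : ℝ :=
  ∑ j, ((∑ i, (wp * p j + wd * d i j - b j) * U i j) +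
    (wq / α j) * ((∑ i, F i j) * (∑ i, U i j) + ∑ i, F i j * U i j))

def lineB (wq : ℝ) (α : Fin m → ℝ) (U : Fin n → Fin m → ℝ) : ℝ :=
  ∑ j, (wq / (2 * α j)) * ((∑ i, U i j) ^ 2 + ∑ i, (U i j) ^ 2)

def blockA (wp wq wd : ℝ) (p b α : Fin m → ℝ) (d : Fin n → Fin m → ℝ)
    (F : Fin n → Fin m → ℝ) (i : Fin n) (u : Fin m → ℝ) : ℝ :=
  ∑ j, (u j * ((wp * p j + wd * d i j - b j) + (wq / α j) * ∑ k, F k j)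
        + (wq / α j) * F i j * u j)

def blockB (wq : ℝ) (α : Fin m → ℝ) (u : Fin m → ℝ) : ℝ :=
  ∑ j, (wq / α j) * u j ^ 2

lemma pot_expand (wp wq wd : ℝ) (p b α : Fin m → ℝ) (d : Fin n → Fin m → ℝ)
    (F U : Fin n → Fin m → ℝ) (t : ℝ) :
    potential wp wq wd p b α d (fun k j => F k j + t * U k j) =
      potential wp wq wd p b α d F + t * lineA wp wq wd p b α d F U +
        t ^ 2 * lineB wq α U := by
  simp only [potential, lineA, lineB]
  rw [Finset.sum_comm (f := fun i j => (wp * p j + wd * d i j - b j) * (F i j + t * U i j)),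
      Finset.sum_comm (f := fun i j => (wp * p j + wd * d i j - b j) * F i j)]
  rw [Finset.mul_sum _ _ t, Finset.mul_sum _ _ (t ^ 2),
      ← Finset.sum_add_distrib, ← Finset.sum_add_distrib, ← Finset.sum_add_distrib,
      ← Finset.sum_add_distrib]
  refine Finset.sum_congr rfl fun j _ => ?_
  have e1 : ∑ i, (wp * p j + wd * d i j - b j) * (F i j + t * U i j)
      = (∑ i, (wp * p j + wd * d i j - b j) * F i j)
        + t * ∑ i, (wp * p j + wd * d i j - b j) * U i j := by
    rw [Finset.mul_sum, ← Finset.sum_add_distrib]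
    exact Finset.sum_congr rfl fun i _ => by ring
  have e2 : ∑ i, (F i j + t * U i j) = (∑ i, F i j) + t * ∑ i, U i j := by
    rw [Finset.mul_sum, ← Finset.sum_add_distrib]
  have e3 : ∑ i, (F i j + t * U i j) ^ 2
      = (∑ i, (F i j) ^ 2) + t * (2 * ∑ i, F i j * U i j) + t ^ 2 * ∑ i, (U i j) ^ 2 := by
    rw [Finset.mul_sum, Finset.mul_sum, Finset.mul_sum,
        ← Finset.sum_add_distrib, ← Finset.sum_add_distrib]
    exact Finset.sum_congr rfl fun i _ => by ring
  rw [e1, e2, e3, show wq / (2 * α j) = wq / α j / 2 by rw [div_div, mul_comm]]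
  ring

lemma cost_expand (wp wq wd : ℝ) (p b α : Fin m → ℝ) (d : Fin n → Fin m → ℝ)
    (F : Fin n → Fin m → ℝ) (i : Fin n) (u : Fin m → ℝ) (t : ℝ) :
    cost wp wq wd p b α d (Function.update F i (fun j => F i j + t * u j)) i
      = cost wp wq wd p b α d F i + t * blockA wp wq wd p b α d F i u
        + t ^ 2 * blockB wq α u := by
  have hsum : ∀ j, ∑ k, (Function.update F i (fun j => F i j + t * u j)) k j
      = (∑ k, F k j) + t * u j := by
    intro j
    have h : ∑ k, ((Function.update F i (fun j => F i j + t * u j)) k j - F k j)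
        = t * u j := by
      rw [Fintype.sum_eq_single i]
      · simp
      · intro k hk; simp [Function.update_of_ne hk]
    rw [Finset.sum_sub_distrib] at h
    linarith
  unfold cost blockA blockB
  simp only [Function.update_self, hsum]
  rw [Finset.mul_sum _ _ t, Finset.mul_sum _ _ (t ^ 2),
      ← Finset.sum_add_distrib, ← Finset.sum_add_distrib]
  refine Finset.sum_congr rfl fun j _ => ?_
  ring

lemma sum_blockA (wp wq wd : ℝ) (p b α : Fin m → ℝ) (d : Fin n → Fin m → ℝ)
    (F U : Fin n → Fin m → ℝ) :
    ∑ i, blockA wp wq wd p b α d F i (U i) = lineA wp wq wd p b α d F U := by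
  unfold blockA lineA
  rw [Finset.sum_comm]
  refine Finset.sum_congr rfl fun j _ => ?_
  calc ∑ i, (U i j * ((wp * p j + wd * d i j - b j) + (wq / α j) * ∑ k, F k j)
          + (wq / α j) * F i j * U i j)
      = ∑ i, ((wp * p j + wd * d i j - b j) * U i j
          + (((wq / α j) * ∑ k, F k j) * U i j + (wq / α j) * (F i j * U i j))) :=
        Finset.sum_congr rfl fun i _ => by ring
    _ = (∑ i, (wp * p j + wd * d i j - b j) * U i j)
          + ((∑ i, ((wq / α j) * ∑ k, F k j) * U i j)
            + ∑ i, (wq / α j) * (F i j * U i j)) := by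
        rw [Finset.sum_add_distrib, Finset.sum_add_distrib]
    _ = (∑ i, (wp * p j + wd * d i j - b j) * U i j) +
          (wq / α j) * ((∑ i, F i j) * (∑ i, U i j) + ∑ i, F i j * U i j) := by
        rw [← Finset.mul_sum, ← Finset.mul_sum]; ring

lemma blockB_nonneg (wq : ℝ) (hwq : 0 < wq) (α : Fin m → ℝ) (hα : ∀ j, 0 < α j)
    (u : Fin m → ℝ) : 0 ≤ blockB wq α u := by
  apply Finset.sum_nonneg
  intro j _
  have := hα j
  positivity

lemma lineB_nonneg (wq : ℝ) (hwq : 0 < wq) (α : Fin m → ℝ) (hα : ∀ j, 0 < α j)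
    (U : Fin n → Fin m → ℝ) : 0 ≤ lineB wq α U := by
  apply Finset.sum_nonneg
  intro j _
  have := hα j
  positivity

end aux

/-- A feasible joint allocation `F*` is a Nash equilibrium of the user-side game
iff it minimizes the potential `Φ` over the feasible set `Δ₁ × ⋯ × Δₙ`. -/
theorem NE_iff_potential_minimizer (n m : ℕ) (wp wd : ℝ) (wq : ℝ) (hwq : 0 < wq)
    (p b : Fin m → ℝ) (α : Fin m → ℝ) (hα : ∀ j, 0 < α j)
    (d : Fin n → Fin m → ℝ) (D : Fin n → ℝ) (hD : ∀ i, 0 < D i)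
    (Fstar : Fin n → Fin m → ℝ) (hfeas : ∀ i, Fstar i ∈ simplex (D i)) :
    (∀ i : Fin n, ∀ g ∈ simplex (D i),
        cost wp wq wd p b α d Fstar i ≤
          cost wp wq wd p b α d (Function.update Fstar i g) i) ↔
      (∀ F : Fin n → Fin m → ℝ, (∀ i, F i ∈ simplex (D i)) →
        potential wp wq wd p b α d Fstar ≤ potential wp wq wd p b α d F) := by
  constructor
  · -- NE → potential minimizer
    intro hNE F hF
    set U : Fin n → Fin m → ℝ := fun k j => F k j - Fstar k j with hU
    have hF' : F = fun k j => Fstar k j + 1 * U k j := by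
      funext k j; simp [hU]
    have hpot := pot_expand wp wq wd p b α d Fstar U 1
    rw [← hF'] at hpot
    have hBnn : 0 ≤ lineB wq α U := lineB_nonneg wq hwq α hα U
    have hAnn : 0 ≤ lineA wp wq wd p b α d Fstar U := by
      rw [← sum_blockA]
      apply Finset.sum_nonneg
      intro i _
      have hBi : 0 ≤ blockB wq α (U i) := blockB_nonneg wq hwq α hα (U i)
      have key : ∀ t : ℝ, 0 < t → t ≤ 1 →
          0 ≤ blockA wp wq wd p b α d Fstar i (U i) + t * blockB wq α (U i) := by
        intro t ht0 ht1
        have hg : (fun j => Fstar i j + t * U i j) ∈ simplex (D i) := by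
          constructor
          · intro j
            show 0 ≤ Fstar i j + t * U i j
            have h1 := (hfeas i).1 j
            have h2 := (hF i).1 j
            have he : Fstar i j + t * U i j = (1 - t) * Fstar i j + t * F i j := by
              simp [hU]; ring
            rw [he]
            have := mul_nonneg ht0.le h2
            nlinarith
          · show ∑ j, (Fstar i j + t * U i j) = D i
            have h1 := (hfeas i).2
            have h2 := (hF i).2
            have hUz : ∑ j, U i j = 0 := by
              simp only [hU]
              rw [Finset.sum_sub_distrib, h2, h1, sub_self]
            rw [Finset.sum_add_distrib, ← Finset.mul_sum, hUz, h1, mul_zero, add_zero]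
        have hc := hNE i _ hg
        rw [cost_expand wp wq wd p b α d Fstar i (U i) t] at hc
        have h1 : 0 ≤ t * (blockA wp wq wd p b α d Fstar i (U i) + t * blockB wq α (U i)) := by
          nlinarith
        nlinarith
      by_contra hneg
      push_neg at hneg
      set A := blockA wp wq wd p b α d Fstar i (U i) with hA
      set B := blockB wq α (U i) with hB
      set t0 : ℝ := min 1 (-A / (2 * (B + 1))) with ht0
      have hden : (0:ℝ) < 2 * (B + 1) := by linarith
      have ht0pos : 0 < t0 := lt_min one_pos (div_pos (by linarith) hden)
      have ht0le1 : t0 ≤ 1 := min_le_left _ _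
      have hkey := key t0 ht0pos ht0le1
      have hle : t0 ≤ -A / (2 * (B + 1)) := min_le_right _ _
      have hmul : t0 * (2 * (B + 1)) ≤ -A := (le_div_iff₀ hden).mp hle
      nlinarith
    linarith
  · -- potential minimizer → NE
    intro hmin i g hg
    have hGfeas : ∀ k, Function.update Fstar i g k ∈ simplex (D k) := by
      intro k
      by_cases hk : k = i
      · subst hk; simpa using hg
      · rw [Function.update_of_ne hk]; exact hfeas k
    have hpg := hmin _ hGfeas
    set u : Fin m → ℝ := fun j => g j - Fstar i j with hu
    have hg' : g = fun j => Fstar i j + 1 * u j := by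
      funext j; simp [hu]
    have hcost := cost_expand wp wq wd p b α d Fstar i u 1
    rw [← hg'] at hcost
    set U : Fin n → Fin m → ℝ := fun k j => Function.update Fstar i g k j - Fstar k j with hU
    have hGeq : Function.update Fstar i g = fun k j => Fstar k j + 1 * U k j := by
      funext k j; simp [hU]
    have hpot := pot_expand wp wq wd p b α d Fstar U 1
    rw [← hGeq] at hpot
    have hAeq : lineA wp wq wd p b α d Fstar U = blockA wp wq wd p b α d Fstar i u := by
      rw [← sum_blockA, Fintype.sum_eq_single i]
      · congr 1
        funext j
        simp [hU, hu]
      · intro k hk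
        have hUk : U k = fun _ => (0:ℝ) := by
          funext j; simp [hU, Function.update_of_ne hk]
        rw [hUk]
        unfold blockA
        simp
    have hBeq : lineB wq α U = blockB wq α u := by
      unfold lineB blockB
      refine Finset.sum_congr rfl fun j _ => ?_
      have h1 : ∑ k, U k j = u j := by
        rw [Fintype.sum_eq_single i]
        · simp [hU, hu]
        · intro k hk; simp [hU, Function.update_of_ne hk]
      have h2 : ∑ k, (U k j) ^ 2 = u j ^ 2 := by
        rw [Fintype.sum_eq_single i]
        · simp [hU, hu]
        · intro k hk; simp [hU, Function.update_of_ne hk]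
      rw [h1, h2, show wq / (2 * α j) = wq / α j / 2 by rw [div_div, mul_comm]]
      ring
    rw [hAeq, hBeq] at hpot
    linarith

end PriLLM
end
end

section
/- Wardrop characterization of the equilibrium: a feasible joint allocation F* ∈ Δ₁ × ⋯ × Δₙ is a Nash equilibrium of the user-side game if and only if for every user i there exists λ_i ∈ ℝ such that for every provider j: M_{ij}(F*) = λ_i whenever f*_{ij} > 0, and M_{ij}(F*) ≥ λ_i whenever f*_{ij} = 0, where M_{ij}(F) = w_p p_j + w_d d_{ij} − b_j + (w_q/α_j)·(Σ_k f_{kj} + f_{ij}) is user i's marginal cost on provider j. -/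
open Finset

noncomputable section

namespace PriLLM

/-- User `i`'s marginal cost on provider `j`:
`Mᵢⱼ(F) = wₚ pⱼ + w_d dᵢⱼ − bⱼ + (w_q/αⱼ)(Σₖ fₖⱼ + fᵢⱼ)`. -/
def marginal {n m : ℕ} (wp wq wd : ℝ) (p b α : Fin m → ℝ)
    (d : Fin n → Fin m → ℝ) (F : Fin n → Fin m → ℝ) (i : Fin n) (j : Fin m) : ℝ :=
  wp * p j + wd * d i j - b j + (wq / α j) * ((∑ k, F k j) + F i j)

/-- Key quadratic expansion: the cost of a unilateral deviation `g` by user `i`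
equals the original cost plus a first-order (marginal) term plus a nonnegative
quadratic term. -/
lemma cost_update {n m : ℕ} (wp wq wd : ℝ) (p b α : Fin m → ℝ)
    (hα : ∀ j, α j ≠ 0) (d : Fin n → Fin m → ℝ) (Fstar : Fin n → Fin m → ℝ)
    (i : Fin n) (g : Fin m → ℝ) :
    cost wp wq wd p b α d (Function.update Fstar i g) i =
      cost wp wq wd p b α d Fstar i +
        ∑ j, (marginal wp wq wd p b α d Fstar i j * (g j - Fstar i j)
          + (wq / α j) * (g j - Fstar i j) ^ 2) := by
  unfold cost marginal
  rw [← Finset.sum_add_distrib]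
  apply Finset.sum_congr rfl
  intro j _
  have hsum : ∑ k, Function.update Fstar i g k j = (∑ k, Fstar k j) + (g j - Fstar i j) := by
    have h1 : ∀ k, Function.update Fstar i g k j
        = Fstar k j + (if k = i then g j - Fstar i j else 0) := by
      intro k
      rcases eq_or_ne k i with rfl | h
      · simp
      · simp [Function.update_of_ne h, h]
    rw [Finset.sum_congr rfl (fun k _ => h1 k)]
    simp [Finset.sum_add_distrib, Finset.sum_ite_eq']
  rw [hsum, Function.update_self]
  have := hα j
  field_simp
  ring

/-- Wardrop characterization: a feasible joint allocation `F*` is a Nash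
equilibrium of the user-side game iff for every user `i` there exists `λᵢ ∈ ℝ`
such that `Mᵢⱼ(F*) = λᵢ` whenever `f*ᵢⱼ > 0` and `Mᵢⱼ(F*) ≥ λᵢ` whenever
`f*ᵢⱼ = 0`. -/
theorem NE_iff_wardrop (n m : ℕ) (wp wd : ℝ) (wq : ℝ) (hwq : 0 < wq)
    (p b : Fin m → ℝ) (α : Fin m → ℝ) (hα : ∀ j, 0 < α j)
    (d : Fin n → Fin m → ℝ) (D : Fin n → ℝ) (hD : ∀ i, 0 < D i)
    (Fstar : Fin n → Fin m → ℝ) (hfeas : ∀ i, Fstar i ∈ simplex (D i)) :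
    (∀ i : Fin n, ∀ g ∈ simplex (D i),
        cost wp wq wd p b α d Fstar i ≤
          cost wp wq wd p b α d (Function.update Fstar i g) i) ↔
      (∀ i : Fin n, ∃ lam : ℝ, ∀ j : Fin m,
        (0 < Fstar i j → marginal wp wq wd p b α d Fstar i j = lam) ∧
        (Fstar i j = 0 → lam ≤ marginal wp wq wd p b α d Fstar i j)) := by
  have hα' : ∀ j, α j ≠ 0 := fun j => (hα j).ne'
  constructor
  · -- NE → Wardrop
    intro hNE i
    obtain ⟨hpos, hsum⟩ := hfeas i
    have hm : ∃ j0, 0 < Fstar i j0 := by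
      by_contra h
      push_neg at h
      have h0 : ∑ j, Fstar i j = 0 :=
        Finset.sum_eq_zero (fun j _ => le_antisymm (h j) (hpos j))
      rw [hsum] at h0
      exact absurd h0 (ne_of_gt (hD i))
    obtain ⟨j0, hj0⟩ := hm
    have claim : ∀ ja jb : Fin m, 0 < Fstar i ja →
        marginal wp wq wd p b α d Fstar i ja ≤ marginal wp wq wd p b α d Fstar i jb := by
      intro ja jb hja
      by_contra hlt
      push_neg at hlt
      rcases eq_or_ne jb ja with rfl | hne
      · exact lt_irrefl _ hlt
      have hδpos : 0 < marginal wp wq wd p b α d Fstar i ja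
          - marginal wp wq wd p b α d Fstar i jb := sub_pos.mpr hlt
      set δ : ℝ := marginal wp wq wd p b α d Fstar i ja
          - marginal wp wq wd p b α d Fstar i jb with hδ
      have hKpos : 0 < wq / α jb + wq / α ja :=
        add_pos (div_pos hwq (hα jb)) (div_pos hwq (hα ja))
      set K : ℝ := wq / α jb + wq / α ja with hK
      have hK0 : K ≠ 0 := ne_of_gt hKpos
      set t : ℝ := min (Fstar i ja) (δ / (2 * K)) with ht
      have htpos : 0 < t := lt_min hja (div_pos hδpos (by positivity))
      have htle : t ≤ Fstar i ja := min_le_left _ _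
      have htK : K * t ≤ δ / 2 := by
        have h1 : t ≤ δ / (2 * K) := min_le_right _ _
        have h2 : K * t ≤ K * (δ / (2 * K)) := mul_le_mul_of_nonneg_left h1 hKpos.le
        have h3 : K * (δ / (2 * K)) = δ / 2 := by
          field_simp
        linarith
      set g : Fin m → ℝ := fun k =>
        Fstar i k + (if k = jb then t else 0) - (if k = ja then t else 0) with hgdef
      have egb : g jb = Fstar i jb + t := by
        simp [hgdef, hne]
      have ega : g ja = Fstar i ja - t := by
        simp [hgdef, Ne.symm hne]
      have ego : ∀ k, k ≠ jb → k ≠ ja → g k = Fstar i k := by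
        intro k h1 h2
        simp [hgdef, h1, h2]
      have hg : g ∈ simplex (D i) := by
        constructor
        · intro k
          by_cases h1 : k = jb
          · subst h1
            rw [egb]
            have := hpos k
            linarith
          · by_cases h2 : k = ja
            · subst h2
              rw [ega]
              linarith
            · rw [ego k h1 h2]
              exact hpos k
        · simp only [hgdef]
          rw [Finset.sum_sub_distrib, Finset.sum_add_distrib]
          simp [Finset.sum_ite_eq', hsum]
      have hcost := hNE i g hg
      rw [cost_update wp wq wd p b α hα' d Fstar i g] at hcost
      have hsum2 : ∑ j', (marginal wp wq wd p b α d Fstar i j' * (g j' - Fstar i j')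
            + (wq / α j') * (g j' - Fstar i j') ^ 2)
          = t * (marginal wp wq wd p b α d Fstar i jb
              - marginal wp wq wd p b α d Fstar i ja + K * t) := by
        have hterm : ∀ j', (marginal wp wq wd p b α d Fstar i j' * (g j' - Fstar i j')
              + (wq / α j') * (g j' - Fstar i j') ^ 2)
            = (if j' = jb then marginal wp wq wd p b α d Fstar i jb * t
                  + (wq / α jb) * t ^ 2 else 0)
              + (if j' = ja then -(marginal wp wq wd p b α d Fstar i ja * t)
                  + (wq / α ja) * t ^ 2 else 0) := by
          intro j'
          by_cases h1 : j' = jb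
          · subst h1
            rw [egb]
            simp [hne]
          · by_cases h2 : j' = ja
            · subst h2
              rw [ega]
              simp [h1]
            · rw [ego j' h1 h2, if_neg h1, if_neg h2]
              ring
        rw [Finset.sum_congr rfl (fun j' _ => hterm j')]
        rw [Finset.sum_add_distrib]
        simp only [Finset.sum_ite_eq', Finset.mem_univ, if_pos, ite_true, if_true]
        rw [hK]
        ring
      rw [hsum2] at hcost
      have h4 : marginal wp wq wd p b α d Fstar i jb
          - marginal wp wq wd p b α d Fstar i ja + K * t ≤ -(δ / 2) := by
        rw [hδ]
        linarith
      have h5 : t * (marginal wp wq wd p b α d Fstar i jb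
            - marginal wp wq wd p b α d Fstar i ja + K * t) ≤ t * (-(δ / 2)) :=
        mul_le_mul_of_nonneg_left h4 htpos.le
      have h6 : t * (-(δ / 2)) < 0 := by nlinarith
      have h7 : 0 ≤ t * (marginal wp wq wd p b α d Fstar i jb
          - marginal wp wq wd p b α d Fstar i ja + K * t) :=
        (le_add_iff_nonneg_right _).mp hcost
      exact absurd (h7.trans h5) (not_le.mpr h6)
    refine ⟨marginal wp wq wd p b α d Fstar i j0, fun j => ⟨fun hj => ?_, fun _ => ?_⟩⟩
    · exact le_antisymm (claim j j0 hj) (claim j0 j hj0)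
    · exact claim j0 j hj0
  · -- Wardrop → NE
    intro hW i g hg
    obtain ⟨lam, hlam⟩ := hW i
    obtain ⟨hgpos, hgsum⟩ := hg
    obtain ⟨hpos, hsum⟩ := hfeas i
    rw [cost_update wp wq wd p b α hα' d Fstar i g]
    have h1 : ∀ j ∈ Finset.univ, lam * (g j - Fstar i j) ≤
        marginal wp wq wd p b α d Fstar i j * (g j - Fstar i j)
          + (wq / α j) * (g j - Fstar i j) ^ 2 := by
      intro j _
      have hq : 0 ≤ (wq / α j) * (g j - Fstar i j) ^ 2 :=
        mul_nonneg (div_nonneg hwq.le (hα j).le) (sq_nonneg _)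
      rcases (hpos j).lt_or_eq with hpos' | heq
      · rw [(hlam j).1 hpos']
        linarith
      · have h0 : Fstar i j = 0 := heq.symm
        have hM := (hlam j).2 h0
        have hmul : lam * (g j - Fstar i j) ≤
            marginal wp wq wd p b α d Fstar i j * (g j - Fstar i j) := by
          rw [h0, sub_zero]
          exact mul_le_mul_of_nonneg_right hM (hgpos j)
        linarith
    have h2 : ∑ j, lam * (g j - Fstar i j) = 0 := by
      rw [← Finset.mul_sum, Finset.sum_sub_distrib, hgsum, hsum]
      ring
    have h3 := Finset.sum_le_sum h1
    rw [h2] at h3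
    linarith

end PriLLM
end
end

section
/- Continuity of the equilibrium map: for fixed capacities α_j > 0, delays d_{ij}, demands D_i > 0, and weights w_p, w_d ∈ ℝ, w_q > 0, the map (p, b) ∈ ℝ^m × ℝ^m ↦ F*(p, b), sending the vector of unit prices p and user-perceived values b to the unique Nash equilibrium of the user-side game with those parameters, is continuous. -/
open Finset Filter Topology

noncomputable section

namespace PriLLM

lemma isClosed_simplex {m : ℕ} (Di : ℝ) : IsClosed (simplex (m := m) Di) := by
  have h1 : IsClosed {f : Fin m → ℝ | ∀ j, 0 ≤ f j} := by
    have : {f : Fin m → ℝ | ∀ j, 0 ≤ f j} = ⋂ j, {f | 0 ≤ f j} := by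
      ext f; simp [Set.mem_iInter]
    rw [this]
    exact isClosed_iInter fun j => isClosed_le continuous_const (continuous_apply j)
  have h2 : IsClosed {f : Fin m → ℝ | ∑ j, f j = Di} :=
    isClosed_eq (continuous_finset_sum _ fun j _ => continuous_apply j) continuous_const
  exact h1.inter h2

lemma isCompact_simplex {m : ℕ} {Di : ℝ} (hDi : 0 ≤ Di) :
    IsCompact (simplex (m := m) Di) := by
  have hsub : simplex (m := m) Di ⊆ Set.pi Set.univ (fun _ => Set.Icc (0 : ℝ) Di) := by
    intro f hf j _
    refine ⟨hf.1 j, ?_⟩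
    calc f j ≤ ∑ k, f k := Finset.single_le_sum (fun k _ => hf.1 k) (mem_univ j)
    _ = Di := hf.2
  exact IsCompact.of_isClosed_subset (isCompact_univ_pi fun _ => isCompact_Icc)
    (isClosed_simplex Di) hsub

lemma cost_continuous {n m : ℕ} (wp wq wd : ℝ) (α : Fin m → ℝ)
    (d : Fin n → Fin m → ℝ) (i : Fin n) :
    Continuous (fun q : ((Fin m → ℝ) × (Fin m → ℝ)) × (Fin n → Fin m → ℝ) =>
      cost wp wq wd q.1.1 q.1.2 α d q.2 i) := by
  unfold cost
  apply continuous_finset_sum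
  intro j _
  have hF : ∀ k : Fin n, Continuous
      (fun q : ((Fin m → ℝ) × (Fin m → ℝ)) × (Fin n → Fin m → ℝ) => q.2 k j) :=
    fun k => (continuous_apply j).comp ((continuous_apply k).comp continuous_snd)
  have hp : Continuous
      (fun q : ((Fin m → ℝ) × (Fin m → ℝ)) × (Fin n → Fin m → ℝ) => q.1.1 j) :=
    (continuous_apply j).comp (continuous_fst.comp continuous_fst)
  have hb : Continuous
      (fun q : ((Fin m → ℝ) × (Fin m → ℝ)) × (Fin n → Fin m → ℝ) => q.1.2 j) :=
    (continuous_apply j).comp (continuous_snd.comp continuous_fst)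
  exact (hF i).mul
    ((((continuous_const.mul hp).add
        (continuous_const.mul ((continuous_finset_sum _ fun k _ => hF k).div_const _))).add
      continuous_const).sub hb)

lemma update_continuous {n m : ℕ} (i : Fin n) (g : Fin m → ℝ) :
    Continuous (fun F : Fin n → Fin m → ℝ => Function.update F i g) := by
  apply continuous_pi
  intro k
  by_cases hk : k = i
  · subst hk; simpa using (continuous_const : Continuous fun _ : Fin n → Fin m → ℝ => g)
  · simp only [Function.update_apply, if_neg hk]
    exact continuous_apply k

set_option maxHeartbeats 1000000 in
/-- Continuity of the equilibrium map: with capacities, delays, demands and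
weights fixed, the map `(p, b) ↦ F*(p, b)` sending the price vector `p` and
perceived-value vector `b` to the unique Nash equilibrium of the user-side game
is continuous. The equilibrium map `Feq` is characterized by the hypotheses
that `Feq p b` is a Nash equilibrium for every `(p, b)` and that every Nash
equilibrium coincides with it. -/
theorem equilibrium_map_continuous (n m : ℕ) (wp wd : ℝ) (wq : ℝ) (hwq : 0 < wq)
    (α : Fin m → ℝ) (hα : ∀ j, 0 < α j)
    (d : Fin n → Fin m → ℝ) (D : Fin n → ℝ) (hD : ∀ i, 0 < D i)
    (Feq : (Fin m → ℝ) → (Fin m → ℝ) → Fin n → Fin m → ℝ)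
    (hNE : ∀ p b : Fin m → ℝ,
      (∀ i, Feq p b i ∈ simplex (D i)) ∧
      ∀ i : Fin n, ∀ g ∈ simplex (D i),
        cost wp wq wd p b α d (Feq p b) i ≤
          cost wp wq wd p b α d (Function.update (Feq p b) i g) i)
    (huniq : ∀ p b : Fin m → ℝ, ∀ G : Fin n → Fin m → ℝ,
      (∀ i, G i ∈ simplex (D i)) →
      (∀ i : Fin n, ∀ g ∈ simplex (D i),
        cost wp wq wd p b α d G i ≤
          cost wp wq wd p b α d (Function.update G i g) i) →
      G = Feq p b) :
    Continuous (fun pb : (Fin m → ℝ) × (Fin m → ℝ) => Feq pb.1 pb.2) := by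
  -- the compact set of feasible joint allocations
  set K : Set (Fin n → Fin m → ℝ) := Set.pi Set.univ (fun i => simplex (D i)) with hK
  have hKcomp : IsCompact K :=
    isCompact_univ_pi fun i => isCompact_simplex (hD i).le
  rw [continuous_iff_seqContinuous]
  intro x pb hx
  apply tendsto_of_subseq_tendsto
  intro ns hns
  -- the subsequence of equilibria lies in the compact set K
  have hmem : ∀ k, (fun pb : (Fin m → ℝ) × (Fin m → ℝ) => Feq pb.1 pb.2) (x (ns k)) ∈ K := by
    intro k i _
    exact (hNE (x (ns k)).1 (x (ns k)).2).1 i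
  obtain ⟨G, hGK, φ, hφ, hGlim⟩ := hKcomp.tendsto_subseq hmem
  refine ⟨φ, ?_⟩
  -- the parameters along the subsequence converge
  have hxlim : Tendsto (fun k => x (ns (φ k))) atTop (𝓝 pb) :=
    hx.comp ((hns.comp hφ.tendsto_atTop))
  -- abbreviations
  set Fk : ℕ → Fin n → Fin m → ℝ :=
    fun k => Feq (x (ns (φ k))).1 (x (ns (φ k))).2 with hFk
  have hFklim : Tendsto Fk atTop (𝓝 G) := hGlim
  -- show the limit G is a Nash equilibrium at pb
  have hGsimp : ∀ i, G i ∈ simplex (D i) := fun i => hGK i (Set.mem_univ i)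
  have hGNE : ∀ i : Fin n, ∀ g ∈ simplex (D i),
      cost wp wq wd pb.1 pb.2 α d G i ≤
        cost wp wq wd pb.1 pb.2 α d (Function.update G i g) i := by
    intro i g hg
    have hpair : Tendsto (fun k => (x (ns (φ k)), Fk k)) atTop (𝓝 (pb, G)) :=
      hxlim.prodMk_nhds hFklim
    have h1 : Tendsto (fun k => cost wp wq wd (x (ns (φ k))).1 (x (ns (φ k))).2 α d (Fk k) i)
        atTop (𝓝 (cost wp wq wd pb.1 pb.2 α d G i)) :=
      ((cost_continuous wp wq wd α d i).tendsto (pb, G)).comp hpair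
    have hpair2 : Tendsto (fun k => (x (ns (φ k)), Function.update (Fk k) i g)) atTop
        (𝓝 (pb, Function.update G i g)) :=
      hxlim.prodMk_nhds (((update_continuous i g).tendsto G).comp hFklim)
    have h2 : Tendsto (fun k => cost wp wq wd (x (ns (φ k))).1 (x (ns (φ k))).2 α d
        (Function.update (Fk k) i g) i) atTop
        (𝓝 (cost wp wq wd pb.1 pb.2 α d (Function.update G i g) i)) :=
      ((cost_continuous wp wq wd α d i).tendsto (pb, Function.update G i g)).comp hpair2
    exact le_of_tendsto_of_tendsto' h1 h2 fun k =>
      (hNE (x (ns (φ k))).1 (x (ns (φ k))).2).2 i g hg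
  have hGeq : G = Feq pb.1 pb.2 := huniq pb.1 pb.2 G hGsimp hGNE
  have hfin : Tendsto (fun k => Feq (x (ns (φ k))).1 (x (ns (φ k))).2) atTop
      (𝓝 (Feq pb.1 pb.2)) := hGeq ▸ hGlim
  exact hfin

end PriLLM
end
end

section
/- Differentiability of the equilibrium map at non-degenerate parameters: fix capacities α_j > 0, delays d_{ij}, demands D_i > 0, perceived values b_j ∈ ℝ, and weights w_p, w_d ∈ ℝ, w_q > 0, and let F*(p) denote the unique Nash equilibrium as a function of the price vector p ∈ ℝ^m. Suppose at p₀ the equilibrium satisfies strict complementarity: for every user i there is λ_i ∈ ℝ with M_{ij}(F*(p₀)) = λ_i for all j with f*_{ij}(p₀) > 0, and M_{ij}(F*(p₀)) > λ_i for all j with f*_{ij}(p₀) = 0, where M_{ij}(F) = w_p p_j + w_d d_{ij} − b_j + (w_q/α_j)·(Σ_k f_{kj} + f_{ij}). Then p ↦ F*(p) is continuously differentiable on a neighborhood of p₀. -/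
open Finset

noncomputable section

namespace PriLLM

/-!
Let `P` be the set of pairs `(i, j)` with `f*ᵢⱼ(p₀) > 0`. With the active set frozen to `P`, the
KKT equalities (`Mᵢⱼ = λᵢ` on `P`, `fᵢⱼ = 0` off `P`, `Σⱼ fᵢⱼ = Dᵢ`) form a square linear system
in `(F, λ)` with right-hand side affine in `p`. It is nonsingular: pairing a kernel element with
`F` gives `Σⱼ (w_q/αⱼ) ((Σᵢ fᵢⱼ)² + Σᵢ fᵢⱼ²) = 0`. Its solution `φ(p)` is therefore smooth, and
`φ(p₀) = (F*(p₀), λ)`. Strict complementarity is an open condition, so for `p` near `p₀` the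
point `φ(p)` satisfies the full KKT conditions, which suffice for each user's convex
best-response problem; hence `φ(p)` is a Nash equilibrium and equals `F*(p)` by uniqueness.
-/

open Filter Topology
open scoped ContDiff

theorem sum_sub_mul_nonneg_of_complementary {ι : Type*} [Fintype ι] {x y M : ι → ℝ} {lam : ℝ}
    (hx : ∀ j, 0 ≤ x j) (hy : ∀ j, 0 ≤ y j) (hsum : ∑ j, y j = ∑ j, x j)
    (hM : ∀ j, lam ≤ M j) (hMx : ∀ j, 0 < x j → M j = lam) :
    0 ≤ ∑ j, (y j - x j) * M j := by
  have hslack : ∀ j, x j * (M j - lam) = 0 := fun j => by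
    rcases (hx j).lt_or_eq with h | h
    · rw [hMx j h, sub_self, mul_zero]
    · rw [← h, zero_mul]
  have hsplit : ∑ j, (y j - x j) * M j = ∑ j, y j * (M j - lam) - ∑ j, x j * (M j - lam)
      + (∑ j, y j - ∑ j, x j) * lam := by
    simp only [mul_sub, sub_mul, sum_sub_distrib, sum_mul]; ring
  rw [hsplit, hsum, sum_eq_zero fun j _ => hslack j, sub_self, zero_mul, sub_zero, add_zero]
  exact sum_nonneg fun j _ => mul_nonneg (hy j) (sub_nonneg.2 (hM j))

theorem sum_update_apply {ι κ R : Type*} [Fintype ι] [DecidableEq ι] [AddCommGroup R]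
    (G : ι → κ → R) (i : ι) (g : κ → R) (j : κ) :
    ∑ k, Function.update G i g k j = ∑ k, G k j + (g j - G i j) := by
  have hcol : ∀ k, Function.update G i g k j = Function.update (fun k => G k j) i (g j) k :=
    fun k => by rcases eq_or_ne k i with rfl | h <;> simp [*]
  rw [sum_congr rfl fun k _ => hcol k, sum_update_of_mem (mem_univ i),
    ← add_sum_erase univ _ (mem_univ i), sdiff_singleton_eq_erase]
  abel

theorem exists_pos_of_mem_simplex {m : ℕ} {Di : ℝ} {f : Fin m → ℝ} (hf : f ∈ simplex Di)
    (hDi : 0 < Di) : ∃ j, 0 < f j := by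
  by_contra! h
  have := sum_nonpos fun j (_ : j ∈ univ) => h j
  linarith [hf.2]

section ActiveSystem

variable {ι κ : Type*} [Fintype ι] [Fintype κ]

theorem sum_sum_mul_congestion (q : κ → ℝ) (F : ι → κ → ℝ) :
    ∑ i, ∑ j, F i j * (q j * (∑ k, F k j + F i j)) =
      ∑ j, q j * ((∑ k, F k j) ^ 2 + ∑ k, F k j ^ 2) := by
  rw [sum_comm]
  refine sum_congr rfl fun j _ => ?_
  have hterm : ∀ i, F i j * (q j * (∑ k, F k j + F i j)) =
      q j * (∑ k, F k j) * F i j + q j * F i j ^ 2 := fun i => by ring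
  rw [sum_congr rfl fun i _ => hterm i, sum_add_distrib, ← mul_sum, ← mul_sum]
  ring

theorem eq_zero_of_sum_sum_mul_congestion_eq_zero {q : κ → ℝ} (hq : ∀ j, 0 < q j)
    {F : ι → κ → ℝ} (h : ∑ i, ∑ j, F i j * (q j * (∑ k, F k j + F i j)) = 0) : F = 0 := by
  have hsq_nonneg : ∀ j, 0 ≤ ∑ k, F k j ^ 2 := fun j => sum_nonneg fun k _ => sq_nonneg _
  rw [sum_sum_mul_congestion, sum_eq_zero_iff_of_nonneg fun j _ =>
    mul_nonneg (hq j).le (add_nonneg (sq_nonneg _) (hsq_nonneg j))] at h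
  ext k j
  have hj := (mul_eq_zero.1 (h j (mem_univ j))).resolve_left (hq j).ne'
  have hsq := (add_eq_zero_iff_of_nonneg (sq_nonneg _) (hsq_nonneg j)).1 hj |>.2
  rw [sum_eq_zero_iff_of_nonneg fun k _ => sq_nonneg _] at hsq
  exact pow_eq_zero_iff two_ne_zero |>.1 (hsq k (mem_univ k))

/-- The linear part of the KKT equalities with active set `P`; `q j` stands for `wq / α j`. -/
def activeSystem (q : κ → ℝ) (P : ι → κ → Prop) [DecidableRel P] :
    ((ι → κ → ℝ) × (ι → ℝ)) →ₗ[ℝ] ((ι → κ → ℝ) × (ι → ℝ)) where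
  toFun x := (fun i j => if P i j then q j * (∑ k, x.1 k j + x.1 i j) - x.2 i else x.1 i j,
    fun i => ∑ j, x.1 i j)
  map_add' x y := by
    ext i j
    · simp only [Prod.fst_add, Prod.snd_add, Pi.add_apply, sum_add_distrib]
      split_ifs <;> ring
    · simp [sum_add_distrib]
  map_smul' c x := by
    ext i j
    · simp only [Prod.smul_fst, Prod.smul_snd, Pi.smul_apply, smul_eq_mul, ← mul_sum,
        RingHom.id_apply]
      split_ifs <;> ring
    · simp [mul_sum]

theorem activeSystem_injective {q : κ → ℝ} (hq : ∀ j, 0 < q j) {P : ι → κ → Prop}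
    [DecidableRel P] (hP : ∀ i, ∃ j, P i j) : Function.Injective (activeSystem q P) := by
  refine (injective_iff_map_eq_zero _).2 fun ⟨F, lam⟩ h => ?_
  have hcoord : ∀ i j, (if P i j then q j * (∑ k, F k j + F i j) - lam i else F i j) = 0 :=
    fun i j => congr_fun (congr_fun (congr_arg Prod.fst h) i) j
  have hrow : ∀ i, ∑ j, F i j = 0 := fun i => congr_fun (congr_arg Prod.snd h) i
  have hactive : ∀ i j, P i j → q j * (∑ k, F k j + F i j) = lam i := fun i j hij => by
    simpa [hij, sub_eq_zero] using hcoord i j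
  have hF : F = 0 := by
    refine eq_zero_of_sum_sum_mul_congestion_eq_zero hq (sum_eq_zero fun i _ => ?_)
    have hpair : ∀ j, F i j * (q j * (∑ k, F k j + F i j)) = F i j * lam i := fun j => by
      by_cases hij : P i j
      · rw [hactive i j hij]
      · simp [show F i j = 0 by simpa [hij] using hcoord i j]
    rw [sum_congr rfl fun j _ => hpair j, ← sum_mul, hrow, zero_mul]
  subst hF
  refine Prod.ext rfl (funext fun i => ?_)
  obtain ⟨j, hij⟩ := hP i
  simpa using (hactive i j hij).symm

theorem eventually_strict_complementarity {X : Type*} [TopologicalSpace X] {x₀ : X}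
    {F M : X → ι → κ → ℝ} {lam : X → ι → ℝ} (hF : Continuous F)
    (hM : Continuous M) (hlam : Continuous lam) (P : ι → κ → Prop)
    (hpos : ∀ i j, P i j → 0 < F x₀ i j) (hgap : ∀ i j, ¬ P i j → lam x₀ i < M x₀ i j) :
    ∀ᶠ x in 𝓝 x₀, ∀ i j, (P i j → 0 < F x i j) ∧ (¬ P i j → lam x i < M x i j) := by
  refine eventually_all.2 fun i => eventually_all.2 fun j => ?_
  have hFij : ContinuousAt (fun x => F x i j) x₀ := by fun_prop
  have hMij : ContinuousAt (fun x => M x i j) x₀ := by fun_prop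
  have hlami : ContinuousAt (fun x => lam x i) x₀ := by fun_prop
  by_cases hij : P i j
  · filter_upwards [continuousAt_const.eventually_lt hFij (hpos i j hij)] with x hx
    exact ⟨fun _ => hx, absurd hij⟩
  · filter_upwards [hlami.eventually_lt hMij (hgap i j hij)] with x hx
    exact ⟨fun h => absurd h hij, fun _ => hx⟩

end ActiveSystem

section Game

variable {n m : ℕ} {wp wq wd : ℝ} {p b α : Fin m → ℝ} {d : Fin n → Fin m → ℝ} {D : Fin n → ℝ}

theorem cost_update_sub_cost (G : Fin n → Fin m → ℝ) (i : Fin n) (g : Fin m → ℝ) :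
    cost wp wq wd p b α d (Function.update G i g) i - cost wp wq wd p b α d G i =
      ∑ j, ((g j - G i j) * marginal wp wq wd p b α d G i j + wq / α j * (g j - G i j) ^ 2) := by
  unfold cost marginal
  rw [← sum_sub_distrib]
  refine sum_congr rfl fun j _ => ?_
  rw [sum_update_apply, Function.update_self, mul_div_assoc']
  ring

theorem cost_le_cost_update_of_kkt (hwq : 0 ≤ wq) (hα : ∀ j, 0 ≤ α j)
    {G : Fin n → Fin m → ℝ} {i : Fin n} {lam : ℝ} (hG : ∀ j, 0 ≤ G i j)
    (hM : ∀ j, lam ≤ marginal wp wq wd p b α d G i j)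
    (hMG : ∀ j, 0 < G i j → marginal wp wq wd p b α d G i j = lam)
    {g : Fin m → ℝ} (hg : g ∈ simplex (∑ j, G i j)) :
    cost wp wq wd p b α d G i ≤ cost wp wq wd p b α d (Function.update G i g) i := by
  have hlin := sum_sub_mul_nonneg_of_complementary hG hg.1 hg.2 hM hMG
  have hquad : 0 ≤ ∑ j, wq / α j * (g j - G i j) ^ 2 :=
    sum_nonneg fun j _ => mul_nonneg (div_nonneg hwq (hα j)) (sq_nonneg _)
  rw [← sub_nonneg, cost_update_sub_cost, sum_add_distrib]
  exact add_nonneg hlin hquad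

variable (wp wq wd p b α d D) in
def IsNashEquilibrium (G : Fin n → Fin m → ℝ) : Prop :=
  (∀ i, G i ∈ simplex (D i)) ∧
    ∀ i, ∀ g ∈ simplex (D i),
      cost wp wq wd p b α d G i ≤ cost wp wq wd p b α d (Function.update G i g) i

variable (wp wq wd p b α d D) in
def SolvesActiveSystem (P : Fin n → Fin m → Prop) (F : Fin n → Fin m → ℝ)
    (lam : Fin n → ℝ) : Prop :=
  ∀ i, (∀ j, P i j → marginal wp wq wd p b α d F i j = lam i) ∧ (∀ j, ¬ P i j → F i j = 0) ∧
    ∑ j, F i j = D i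

theorem SolvesActiveSystem.isNashEquilibrium (hwq : 0 ≤ wq) (hα : ∀ j, 0 ≤ α j)
    {P : Fin n → Fin m → Prop} {F : Fin n → Fin m → ℝ} {lam : Fin n → ℝ}
    (hF : SolvesActiveSystem wp wq wd p b α d D P F lam) (hpos : ∀ i j, P i j → 0 ≤ F i j)
    (hdual : ∀ i j, ¬ P i j → lam i ≤ marginal wp wq wd p b α d F i j) :
    IsNashEquilibrium wp wq wd p b α d D F := by
  have hnonneg : ∀ i j, 0 ≤ F i j := fun i j => by
    by_cases hij : P i j
    · exact hpos i j hij
    · rw [(hF i).2.1 j hij]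
  refine ⟨fun i => ⟨hnonneg i, (hF i).2.2⟩, fun i g hg => ?_⟩
  refine cost_le_cost_update_of_kkt (lam := lam i) hwq hα (hnonneg i) (fun j => ?_)
    (fun j hj => ?_) ((hF i).2.2 ▸ hg)
  · by_cases hij : P i j
    · exact ((hF i).1 j hij).ge
    · exact hdual i j hij
  · by_cases hij : P i j
    · exact (hF i).1 j hij
    · exact absurd ((hF i).2.1 j hij) hj.ne'

variable (wp wd b d D) in
def activeRhs (P : Fin n → Fin m → Prop) [DecidableRel P] (p : Fin m → ℝ) :
    (Fin n → Fin m → ℝ) × (Fin n → ℝ) :=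
  (fun i j => if P i j then b j - wd * d i j - wp * p j else 0, D)

theorem activeSystem_eq_activeRhs_iff {P : Fin n → Fin m → Prop} [DecidableRel P]
    {F : Fin n → Fin m → ℝ} {lam : Fin n → ℝ} :
    activeSystem (fun j => wq / α j) P (F, lam) = activeRhs wp wd b d D P p ↔
      SolvesActiveSystem wp wq wd p b α d D P F lam := by
  simp only [activeSystem, activeRhs, LinearMap.coe_mk, AddHom.coe_mk, Prod.mk.injEq,
    funext_iff, SolvesActiveSystem, marginal]
  refine ⟨fun ⟨hcoord, hrow⟩ i => ⟨fun j hij => ?_, fun j hij => ?_, hrow i⟩,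
    fun h => ⟨fun i j => ?_, fun i => (h i).2.2⟩⟩
  · have hij' := hcoord i j
    rw [if_pos hij, if_pos hij] at hij'
    linarith
  · simpa [hij] using hcoord i j
  · by_cases hij : P i j
    · rw [if_pos hij, if_pos hij]
      linarith [(h i).1 j hij]
    · rw [if_neg hij, if_neg hij]
      exact (h i).2.1 j hij

theorem contDiff_activeRhs (P : Fin n → Fin m → Prop) [DecidableRel P] {k : WithTop ℕ∞} :
    ContDiff ℝ k (activeRhs wp wd b d D P) := by
  refine ContDiff.prodMk (contDiff_pi.2 fun i => contDiff_pi.2 fun j => ?_) contDiff_const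
  by_cases hij : P i j
  · simp only [hij, if_true]
    fun_prop
  · simp only [hij, if_false]
    exact contDiff_const

variable (wp wq wd b α d D) in
theorem exists_contDiff_eq_iff_solvesActiveSystem (hwq : 0 < wq) (hα : ∀ j, 0 < α j)
    (P : Fin n → Fin m → Prop) [DecidableRel P] (hP : ∀ i, ∃ j, P i j) :
    ∃ φ : (Fin m → ℝ) → (Fin n → Fin m → ℝ) × (Fin n → ℝ), ContDiff ℝ ω φ ∧
      ∀ p F lam, φ p = (F, lam) ↔ SolvesActiveSystem wp wq wd p b α d D P F lam := by
  let e := LinearEquiv.ofInjectiveEndo _ (activeSystem_injective (fun j => div_pos hwq (hα j)) hP)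
  refine ⟨fun p => e.symm (activeRhs wp wd b d D P p),
    (LinearMap.toContinuousLinearMap e.symm.toLinearMap).contDiff.comp (contDiff_activeRhs P),
    fun p F lam => ?_⟩
  rw [← activeSystem_eq_activeRhs_iff, LinearEquiv.symm_apply_eq, eq_comm]
  rfl

end Game

/-- Differentiability of the equilibrium map at non-degenerate parameters: if
the unique equilibrium `F*(p₀)` satisfies strict complementarity at the price
vector `p₀`, then `p ↦ F*(p)` is continuously differentiable on a neighborhood
of `p₀`. The equilibrium map `Feq` is characterized by the hypotheses that
`Feq p` is a Nash equilibrium for every `p` and that every Nash equilibrium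
coincides with it. -/
theorem equilibrium_map_contDiff_at_nondegenerate (n m : ℕ)
    (wp wd : ℝ) (wq : ℝ) (hwq : 0 < wq)
    (b : Fin m → ℝ) (α : Fin m → ℝ) (hα : ∀ j, 0 < α j)
    (d : Fin n → Fin m → ℝ) (D : Fin n → ℝ) (hD : ∀ i, 0 < D i)
    (Feq : (Fin m → ℝ) → Fin n → Fin m → ℝ)
    (hNE : ∀ p : Fin m → ℝ,
      (∀ i, Feq p i ∈ simplex (D i)) ∧
      ∀ i : Fin n, ∀ g ∈ simplex (D i),
        cost wp wq wd p b α d (Feq p) i ≤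
          cost wp wq wd p b α d (Function.update (Feq p) i g) i)
    (huniq : ∀ p : Fin m → ℝ, ∀ G : Fin n → Fin m → ℝ,
      (∀ i, G i ∈ simplex (D i)) →
      (∀ i : Fin n, ∀ g ∈ simplex (D i),
        cost wp wq wd p b α d G i ≤
          cost wp wq wd p b α d (Function.update G i g) i) →
      G = Feq p)
    (p₀ : Fin m → ℝ)
    (hstrict : ∀ i : Fin n, ∃ lam : ℝ, ∀ j : Fin m,
      (0 < Feq p₀ i j → marginal wp wq wd p₀ b α d (Feq p₀) i j = lam) ∧
      (Feq p₀ i j = 0 → lam < marginal wp wq wd p₀ b α d (Feq p₀) i j)) :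
    ∃ U : Set (Fin m → ℝ), IsOpen U ∧ p₀ ∈ U ∧ ContDiffOn ℝ 1 Feq U := by
  classical
  have hFeq₀ := (hNE p₀).1
  choose lam hlam using hstrict
  set P : Fin n → Fin m → Prop := fun i j => 0 < Feq p₀ i j
  have hzero : ∀ i j, ¬ P i j → Feq p₀ i j = 0 := fun i j h =>
    le_antisymm (not_lt.1 h) ((hFeq₀ i).1 j)
  obtain ⟨φ, hφ_smooth, hφ⟩ := exists_contDiff_eq_iff_solvesActiveSystem wp wq wd b α d D hwq hα
    P fun i => exists_pos_of_mem_simplex (hFeq₀ i) (hD i)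
  have hφ₀ : φ p₀ = (Feq p₀, lam) :=
    (hφ p₀ _ _).2 fun i => ⟨fun j h => (hlam i j).1 h, hzero i, (hFeq₀ i).2⟩
  have hφ_cont : Continuous φ := hφ_smooth.continuous
  have hstable := eventually_strict_complementarity (x₀ := p₀) (F := fun p => (φ p).1)
    (lam := fun p => (φ p).2) (M := fun p => marginal wp wq wd p b α d (φ p).1)
    (by fun_prop) (by unfold marginal; fun_prop) (by fun_prop) P
    (fun i j hij => by simpa [hφ₀] using hij)
    fun i j hij => by simpa [hφ₀] using (hlam i j).2 (hzero i j hij)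
  have hnear : ∀ᶠ p in 𝓝 p₀, Feq p = (φ p).1 := by
    filter_upwards [hstable] with p hp
    have hnash := ((hφ p _ _).1 rfl).isNashEquilibrium hwq.le (fun j => (hα j).le)
      (fun i j hij => ((hp i j).1 hij).le) fun i j hij => ((hp i j).2 hij).le
    exact (huniq p _ hnash.1 hnash.2).symm
  obtain ⟨U, hU, hUo, hp₀U⟩ := eventually_nhds_iff.1 hnear
  exact ⟨U, hUo, hp₀U, ((contDiff_fst.comp hφ_smooth).of_le le_top).contDiffOn.congr hU⟩

end PriLLM
end
end
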